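/- arXiv:2108.00025 — 2 statements merged into one kernel-verified Lean document; each statement's English description precedes it below -/
import Mathlib

section
/- Let A and A' be unital C*-algebras, P₁ a nontrivial symmetric projection in A, P₂ = I_A − P₁, A_{jk} = P_j A P_k, and suppose A satisfies (♠): for j ∈ {1,2}, P_j A X = {0} implies X = 0. Fix an integer n ≥ 2 and let φ: A → A' be a bijective map with φ(I_A) = I_{A'}, φ(λA) = λφ(A) for all λ ∈ ℂ, satisfying (•): φ(p_{n*}(A,B,Ξ,…,Ξ)) = p_{n*}(φ(A),φ(B),φ(Ξ),…,φ(Ξ)) for all A, B ∈ A and Ξ ∈ {P₁, P₂, I_A}. Then for j ≠ k in {1,2}, any A_{jk} ∈ A_{jk} and B_{kj} ∈ A_{kj} satisfy φ(A_{jk} B_{kj}) = φ(A_{jk})φ(B_{kj}). -/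
/-- The `*`-Lie product `[x,y]_* = xy - y x*`. -/
def starLie {R : Type*} [Ring R] [StarRing R] (x y : R) : R := x * y - y * star x

/-- `pn n a b xi = p_{n*}(a, b, xi, ..., xi)` (with `n - 2` trailing copies of `xi`). -/
def pn {R : Type*} [Ring R] [StarRing R] (n : ℕ) (a b ξ : R) : R :=
  (fun z => starLie z ξ)^[n - 2] (starLie a b)

/-!
For self-adjoint `b`, the polynomial `p_{n*}(a, b, 1, …, 1)` equals `2^(n-2) (ab - (ab)*)`,
so `φ` preserves the skew-adjoint part of `ab`; applied to `a` and `i a` this gives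
`φ(ab) = φ(a) φ(b)` whenever `b` is self-adjoint (and `b = 1` shows that `φ` preserves
self-adjointness). An element `b ∈ A_kj` factors as `(b + b*) P_j`, a product of two
self-adjoint elements, so `φ(ab) = φ(a (b + b*)) φ(P_j) = φ(a) φ(b + b*) φ(P_j) = φ(a) φ(b)`.
-/

open Complex (I)

section StarRing

variable {R : Type*} [Ring R] [StarRing R]

theorem star_sub_star_eq_neg (z : R) : star (z - star z) = -(z - star z) := by
  rw [star_sub, star_star, neg_sub]

theorem starLie_eq_sub_star (a : R) {b : R} (hb : IsSelfAdjoint b) :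
    starLie a b = a * b - star (a * b) := by
  rw [starLie, star_mul, hb.star_eq]

theorem IsStarProjection.add_star_mul_eq_self {p : R} (hp : IsStarProjection p) (y : R) :
    ((1 - p) * y * p + star ((1 - p) * y * p)) * p = (1 - p) * y * p := by
  have hp2 : p * p = p := hp.isIdempotentElem
  simp only [star_mul, hp.isSelfAdjoint.star_eq, star_sub, add_mul, mul_assoc,
    sub_mul, one_mul, hp2, sub_self, add_zero]

end StarRing

section ComplexStarModule

variable {R : Type*} [Ring R] [StarRing R] [Module ℂ R] [StarModule ℂ R]

theorem iterate_starLie_one_of_star_eq_neg {z : R} (hz : star z = -z) (m : ℕ) :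
    (fun y => starLie y 1)^[m] z = (2 : ℂ) ^ m • z := by
  induction m with
  | zero => simp
  | succ m ih =>
    rw [Function.iterate_succ_apply', ih, starLie, star_smul, hz, pow_succ, mul_smul, two_smul]
    simp

theorem pn_one_of_isSelfAdjoint (n : ℕ) (a : R) {b : R} (hb : IsSelfAdjoint b) :
    pn n a b 1 = (2 : ℂ) ^ (n - 2) • (a * b - star (a * b)) := by
  rw [pn, starLie_eq_sub_star a hb]
  exact iterate_starLie_one_of_star_eq_neg (star_sub_star_eq_neg _) _

theorem eq_of_sub_star_eq {z w : R} (h : z - star z = w - star w)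
    (hI : I • z - star (I • z) = I • w - star (I • w)) : z = w := by
  simp only [star_smul, Complex.star_def, Complex.conj_I, neg_smul, sub_neg_eq_add,
    ← smul_add] at hI
  have hI' := smul_right_injective R Complex.I_ne_zero hI
  linear_combination (norm := module) (2⁻¹ : ℂ) • (h + hI')

end ComplexStarModule

structure PreservesPnOne {R R' : Type*} [Ring R] [StarRing R] [Module ℂ R]
    [Ring R'] [StarRing R'] [Module ℂ R'] (n : ℕ) (φ : R → R') : Prop where
  map_one : φ 1 = 1
  map_smul : ∀ (c : ℂ) (a : R), φ (c • a) = c • φ a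
  map_pn : ∀ a b : R, φ (pn n a b 1) = pn n (φ a) (φ b) 1

namespace PreservesPnOne

variable {R R' : Type*} [Ring R] [StarRing R] [Algebra ℂ R] [StarModule ℂ R]
  [Ring R'] [StarRing R'] [Algebra ℂ R'] [StarModule ℂ R'] {n : ℕ} {φ : R → R'}

theorem map_mul_sub_star (hφ : PreservesPnOne n φ) (a : R) {b : R} (hb : IsSelfAdjoint b)
    (hφb : IsSelfAdjoint (φ b)) :
    φ (a * b - star (a * b)) = φ a * φ b - star (φ a * φ b) := by
  have h := hφ.map_pn a b
  rw [pn_one_of_isSelfAdjoint n a hb, pn_one_of_isSelfAdjoint n _ hφb, hφ.map_smul] at h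
  exact smul_right_injective R' (pow_ne_zero _ two_ne_zero) h

theorem map_sub_star (hφ : PreservesPnOne n φ) (a : R) :
    φ (a - star a) = φ a - star (φ a) := by
  simpa [hφ.map_one] using hφ.map_mul_sub_star a (.one R) (hφ.map_one ▸ .one R')

theorem isSelfAdjoint_map (hφ : PreservesPnOne n φ) {a : R} (ha : IsSelfAdjoint a) :
    IsSelfAdjoint (φ a) := by
  have h := hφ.map_sub_star a
  have hφ0 : φ 0 = 0 := by simpa using hφ.map_smul 0 0
  rw [ha.star_eq, sub_self, hφ0] at h
  exact (sub_eq_zero.mp h.symm).symm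

theorem map_mul_of_isSelfAdjoint (hφ : PreservesPnOne n φ) (a : R) {b : R}
    (hb : IsSelfAdjoint b) : φ (a * b) = φ a * φ b := by
  have hφb := hφ.isSelfAdjoint_map hb
  refine eq_of_sub_star_eq ?_ ?_
  · rw [← hφ.map_sub_star, hφ.map_mul_sub_star a hb hφb]
  · rw [← hφ.map_smul, ← hφ.map_sub_star, ← smul_mul_assoc, hφ.map_mul_sub_star _ hb hφb,
      hφ.map_smul, smul_mul_assoc]

theorem map_mul_mul_of_isSelfAdjoint (hφ : PreservesPnOne n φ) (a : R) {t p : R}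
    (ht : IsSelfAdjoint t) (hp : IsSelfAdjoint p) : φ (a * (t * p)) = φ a * φ (t * p) := by
  rw [← mul_assoc, hφ.map_mul_of_isSelfAdjoint _ hp, hφ.map_mul_of_isSelfAdjoint _ ht,
    hφ.map_mul_of_isSelfAdjoint _ hp, mul_assoc]

end PreservesPnOne

variable {A A' : Type*}
  [NormedRing A] [StarRing A] [CStarRing A] [NormedAlgebra ℂ A]
  [CompleteSpace A] [StarModule ℂ A]
  [NormedRing A'] [StarRing A'] [CStarRing A'] [NormedAlgebra ℂ A']
  [CompleteSpace A'] [StarModule ℂ A']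

theorem stmt15_general
    (P₁ : A) (hP₁proj : P₁ * P₁ = P₁) (hP₁star : star P₁ = P₁)
    (P₂ : A) (hP₂ : P₂ = 1 - P₁)
    (n : ℕ)
    (φ : A → A') (hunit : φ 1 = 1)
    (hsmul : ∀ (c : ℂ) (a : A), φ (c • a) = c • φ a)
    (hbullet : ∀ a b : A, ∀ Ξ ∈ ({P₁, P₂, 1} : Set A),
      φ (pn n a b Ξ) = pn n (φ a) (φ b) (φ Ξ))
    :
    ∀ Pj Pk : A, (Pj = P₁ ∧ Pk = P₂) ∨ (Pj = P₂ ∧ Pk = P₁) →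
      ∀ a b : A, (∃ x : A, a = Pj * x * Pk) → (∃ y : A, b = Pk * y * Pj) →
        φ (a * b) = φ a * φ b := by
  have hφ : PreservesPnOne n φ :=
    ⟨hunit, hsmul, fun a b => by simpa [hunit] using hbullet a b 1 (by simp)⟩
  have hP₁ : IsStarProjection P₁ := ⟨hP₁proj, hP₁star⟩
  rintro Pj Pk hjk a b - ⟨y, rfl⟩
  obtain ⟨hPj, rfl⟩ : IsStarProjection Pj ∧ Pk = 1 - Pj := by
    rcases hjk with ⟨rfl, rfl⟩ | ⟨rfl, rfl⟩
    · exact ⟨hP₁, hP₂⟩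
    · exact ⟨hP₂ ▸ hP₁.one_sub, by rw [hP₂, sub_sub_cancel]⟩
  rw [← hPj.add_star_mul_eq_self y]
  exact hφ.map_mul_mul_of_isSelfAdjoint a (.add_star_self _) hPj.isSelfAdjoint

theorem stmt15
    (P₁ : A) (hP₁proj : P₁ * P₁ = P₁) (hP₁star : star P₁ = P₁)
    (hP₁ne0 : P₁ ≠ 0) (hP₁ne1 : P₁ ≠ 1)
    (P₂ : A) (hP₂ : P₂ = 1 - P₁)
    (hspade : ∀ Pj ∈ ({P₁, P₂} : Set A), ∀ X : A, (∀ Y : A, Pj * Y * X = 0) → X = 0)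
    (n : ℕ) (hn : 2 ≤ n)
    (φ : A → A') (hbij : Function.Bijective φ) (hunit : φ 1 = 1)
    (hsmul : ∀ (c : ℂ) (a : A), φ (c • a) = c • φ a)
    (hbullet : ∀ a b : A, ∀ Ξ ∈ ({P₁, P₂, 1} : Set A),
      φ (pn n a b Ξ) = pn n (φ a) (φ b) (φ Ξ))
    :
    ∀ Pj Pk : A, (Pj = P₁ ∧ Pk = P₂) ∨ (Pj = P₂ ∧ Pk = P₁) →
      ∀ a b : A, (∃ x : A, a = Pj * x * Pk) → (∃ y : A, b = Pk * y * Pj) →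
        φ (a * b) = φ a * φ b :=
  stmt15_general P₁ hP₁proj hP₁star P₂ hP₂ n φ hunit hsmul hbullet
end

section
/- Let A and A' be unital C*-algebras, P₁ a nontrivial symmetric projection in A, P₂ = I_A − P₁, and suppose A satisfies (♠): for j ∈ {1,2}, P_j A X = {0} implies X = 0. Fix an integer n ≥ 2 and let φ: A → A' be a bijective map with φ(I_A) = I_{A'}, φ(λA) = λφ(A) for all λ ∈ ℂ, satisfying (♣): for j ∈ {1,2}, φ(P_j) A' Y = {0} implies Y = 0. Then φ is a multiplicative *-Lie n-map (i.e., φ(p_{n*}(x₁,…,x_n)) = p_{n*}(φ(x₁),…,φ(x_n)) for all x₁,…,x_n ∈ A) if and only if φ is a *-isomorphism (additive, multiplicative, and star-preserving). -/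
variable {A A' : Type*}
  [NormedRing A] [StarRing A] [CStarRing A] [NormedAlgebra ℂ A]
  [CompleteSpace A] [StarModule ℂ A]
  [NormedRing A'] [StarRing A'] [CStarRing A'] [NormedAlgebra ℂ A']
  [CompleteSpace A'] [StarModule ℂ A']

/-- `pvec m x = p_{(m+1)*}(x 0, ..., x m)`. -/
def pvec {R : Type*} [Ring R] [StarRing R] : (m : ℕ) → (Fin (m + 1) → R) → R
  | 0, x => x 0
  | m + 1, x => starLie (pvec m (fun i => x i.castSucc)) (x (Fin.last (m + 1)))

/-!
Padding `p_{n*}` with copies of `½`, which fix every skew element (`[z, ½]_* = z` when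
`z* = -z`), reduces the `n`-ary identity to binary ones: `φ` preserves `[x, h]_*` and the Jordan
product `h x + x h` whenever `h` is self-adjoint. Additivity then comes from the Peirce
decomposition `x = Σ Pᵢ x Pⱼ`: if `φ t = φ a + φ b`, every preserved operation `f` whose values at
`a` and `b` are already known to split satisfies `f t = f (a + b)` by injectivity, and enough such
`f` determine `t`; condition (♠) is what pins down the diagonal corners. An additive `φ` is
`ℂ`-linear and sends self-adjoint elements to self-adjoint ones, so it preserves `*`; adding
`[x, h]_*` to `[i x, h]_* / i` gives `φ (x h) = φ x φ h` for self-adjoint `h`, and every element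
is `h + i k` with `h`, `k` self-adjoint.
-/

section PVec

variable {R : Type*} [Ring R] [StarRing R]

theorem pvec_snoc (k : ℕ) (x : Fin (k + 1) → R) (y : R) :
    pvec (k + 1) (Fin.snoc x y) = starLie (pvec k x) y := by
  rw [pvec]
  simp only [Fin.snoc_castSucc, Fin.snoc_last]

theorem pvec_eq_iterate (ξ : R) :
    ∀ (k : ℕ) (x : Fin (k + 1) → R), (∀ i, i ≠ 0 → x i = ξ) →
      pvec k x = (fun z => starLie z ξ)^[k] (x 0)
  | 0, _, _ => rfl
  | k + 1, x, hx => by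
    rw [pvec, pvec_eq_iterate ξ k _ fun i hi => hx _ (Fin.castSucc_ne_zero_iff.2 hi),
      hx _ (Fin.last_pos.ne'), Function.iterate_succ_apply']
    rfl

theorem pvec_succ_eq_pn (ξ : R) :
    ∀ (k : ℕ) (x : Fin (k + 2) → R), (∀ i : Fin (k + 2), 2 ≤ (i : ℕ) → x i = ξ) →
      pvec (k + 1) x = pn (k + 2) (x 0) (x 1) ξ
  | 0, _, _ => rfl
  | k + 1, x, hx => by
    rw [pvec, pvec_succ_eq_pn ξ k _ fun i hi => hx _ (by simpa using hi),
      hx (Fin.last _) (by simp), Fin.castSucc_zero, Fin.castSucc_one]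
    simp only [pn, Nat.add_sub_cancel, Function.iterate_succ_apply']

theorem map_pvec {S : Type*} [Ring S] [StarRing S] {φ : R → S}
    (hadd : ∀ a b, φ (a + b) = φ a + φ b) (hmul : ∀ a b, φ (a * b) = φ a * φ b)
    (hstar : ∀ a, φ (star a) = star (φ a)) :
    ∀ (k : ℕ) (x : Fin (k + 1) → R), φ (pvec k x) = pvec k (fun i => φ (x i))
  | 0, _ => rfl
  | k + 1, x => by
    have hsub : ∀ a b, φ (a - b) = φ a - φ b := map_sub (AddMonoidHom.mk' φ hadd)
    simp only [pvec, starLie, hsub, hmul, hstar, map_pvec hadd hmul hstar k]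

end PVec

section Products

variable {R : Type*} [Ring R]

def jordanMul (h : R) : R →+ R := AddMonoidHom.mulLeft h + AddMonoidHom.mulRight h

@[simp] theorem jordanMul_apply (h x : R) : jordanMul h x = h * x + x * h := rfl

theorem eq_of_jordanMul_eq [IsAddTorsionFree R] {e t s : R}
    (h₁ : jordanMul e t = jordanMul e s) (h₂ : jordanMul (1 - e) t = jordanMul (1 - e) s) :
    t = s := by
  have key : ∀ u : R, 2 • u = jordanMul e u + jordanMul (1 - e) u := fun u => by
    simp only [jordanMul_apply]; noncomm_ring
  exact nsmul_right_injective two_ne_zero (by simp only [key, h₁, h₂])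

variable [StarRing R]

def starLieRight (h : R) : R →+ R where
  toFun x := starLie x h
  map_zero' := by simp [starLie]
  map_add' x y := by simp only [starLie, star_add]; noncomm_ring

@[simp] theorem starLieRight_apply (h x : R) : starLieRight h x = starLie x h := rfl

end Products

theorem apply_eq_apply_add_of_map_eq_add {R S : Type*} [AddZeroClass R] [AddZeroClass S]
    {φ : R → S} (hφ : Function.Injective φ) {f : R →+ R} {g : S →+ S}
    (hfg : ∀ x, φ (f x) = g (φ x)) {t a b : R} (ht : φ t = φ a + φ b)
    (hab : φ (f a + f b) = φ (f a) + φ (f b)) : f t = f (a + b) :=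
  hφ <| by rw [hfg t, ht, map_add g, ← hfg, ← hfg, ← hab, map_add f]

structure PreservesSelfAdjointProducts {R S : Type*} [Ring R] [StarRing R] [Ring S] [StarRing S]
    (φ : R → S) : Prop where
  map_zero : φ 0 = 0
  map_jordanMul : ∀ h, IsSelfAdjoint h → ∀ x, φ (jordanMul h x) = jordanMul (φ h) (φ x)
  map_starLie : ∀ h, IsSelfAdjoint h → ∀ x, φ (starLie x h) = starLie (φ x) (φ h)

theorem starLie_half_smul_one {R : Type*} [Ring R] [StarRing R] [Algebra ℂ R] {z : R}
    (hz : star z = -z) : starLie z ((2 : ℂ)⁻¹ • 1) = z := by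
  rw [starLie, hz, mul_smul_one, smul_one_mul, smul_neg, sub_neg_eq_add, ← add_smul]
  norm_num

theorem iterate_starLie_half_smul_one {R : Type*} [Ring R] [StarRing R] [Algebra ℂ R] {z : R}
    (hz : star z = -z) (n : ℕ) : (fun y => starLie y ((2 : ℂ)⁻¹ • 1))^[n] z = z :=
  Function.iterate_fixed (f := fun y => starLie y ((2 : ℂ)⁻¹ • 1)) (starLie_half_smul_one hz) n

theorem star_starLie_of_isSelfAdjoint {R : Type*} [Ring R] [StarRing R] {h : R}
    (hh : IsSelfAdjoint h) (x : R) : star (starLie x h) = -starLie x h := by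
  simp only [starLie, star_sub, star_mul, star_star, hh.star_eq, neg_sub]

theorem starLie_I_smul {R : Type*} [Ring R] [StarRing R] [Algebra ℂ R] [StarModule ℂ R]
    (x y : R) : starLie (Complex.I • x) y = Complex.I • (x * y + y * star x) := by
  rw [starLie, star_smul, Complex.star_def, Complex.conj_I, smul_mul_assoc, mul_smul_comm,
    neg_smul, sub_neg_eq_add, smul_add]

section StarLieMap

variable {R S : Type*} [Ring R] [StarRing R] [Algebra ℂ R] [Ring S] [StarRing S] [Algebra ℂ S]
  {m : ℕ} {φ : R → S}
  (hpv : ∀ x : Fin (m + 2) → R, φ (pvec (m + 1) x) = pvec (m + 1) (fun i => φ (x i)))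
  (hsmul : ∀ (c : ℂ) (a : R), φ (c • a) = c • φ a) (hunit : φ 1 = 1)
include hpv hsmul hunit

theorem map_starLie_of_skew {a b : R} (hab : star (starLie a b) = -starLie a b)
    (hab' : star (starLie (φ a) (φ b)) = -starLie (φ a) (φ b)) :
    φ (starLie a b) = starLie (φ a) (φ b) := by
  have hx := hpv fun i => if (i : ℕ) = 0 then a else if (i : ℕ) = 1 then b else (2 : ℂ)⁻¹ • 1
  rw [pvec_succ_eq_pn _ m _ fun i hi => by rw [if_neg (by omega), if_neg (by omega)],
    pvec_succ_eq_pn _ m _ fun i hi => by rw [if_neg (by omega), if_neg (by omega), hsmul, hunit]]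
    at hx
  simp only [Fin.val_zero, Fin.val_one, one_ne_zero, ↓reduceIte, pn, Nat.add_sub_cancel] at hx
  rwa [iterate_starLie_half_smul_one hab, iterate_starLie_half_smul_one hab'] at hx

theorem map_sub_star (x : R) : φ (x - star x) = φ x - star (φ x) := by
  have h := map_starLie_of_skew hpv hsmul hunit (a := x) (b := 1) (by simp [starLie])
    (by simp [starLie, hunit])
  simpa [starLie, hunit] using h

theorem isSelfAdjoint_map_of_isSelfAdjoint {h : R} (hh : IsSelfAdjoint h) :
    IsSelfAdjoint (φ h) := by
  have h0 : φ 0 = 0 := by simpa using hsmul 0 0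
  have := map_sub_star hpv hsmul hunit h
  rw [hh.star_eq, sub_self, h0, eq_comm, sub_eq_zero] at this
  exact this.symm

theorem star_map_of_skew {s : R} (hs : star s = -s) : star (φ s) = -φ s := by
  have h := map_sub_star hpv hsmul hunit s
  rw [hs, sub_neg_eq_add, ← two_smul ℂ s, hsmul, two_smul] at h
  calc star (φ s) = φ s - (φ s - star (φ s)) := by abel
    _ = -φ s := by rw [← h]; abel

theorem map_starLie_of_isSelfAdjoint {h : R} (hh : IsSelfAdjoint h) (x : R) :
    φ (starLie x h) = starLie (φ x) (φ h) :=
  map_starLie_of_skew hpv hsmul hunit (star_starLie_of_isSelfAdjoint hh x)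
    (star_starLie_of_isSelfAdjoint (isSelfAdjoint_map_of_isSelfAdjoint hpv hsmul hunit hh) _)

theorem map_starLie_of_skew_left {s : R} (hs : star s = -s) (b : R) :
    φ (starLie s b) = starLie (φ s) (φ b) := by
  let y : Fin (m + 1) → R := fun i => if i = 0 then s else (2 : ℂ)⁻¹ • 1
  have hx := hpv (Fin.snoc y b)
  rw [pvec_snoc, pvec_eq_iterate _ m y fun i hi => if_neg hi, show y 0 = s from if_pos rfl,
    iterate_starLie_half_smul_one hs, ← Function.comp_def φ, Fin.comp_snoc, pvec_snoc,
    pvec_eq_iterate ((2 : ℂ)⁻¹ • 1) m _ fun i hi => by simp [y, hi, hsmul, hunit]] at hx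
  simpa [y, iterate_starLie_half_smul_one (star_map_of_skew hpv hsmul hunit hs)] using hx

theorem map_jordanMul [StarModule ℂ R] [StarModule ℂ S] {h : R} (hh : IsSelfAdjoint h) (x : R) :
    φ (jordanMul h x) = jordanMul (φ h) (φ x) := by
  have hIh : star (Complex.I • h) = -(Complex.I • h) := by
    rw [star_smul, hh.star_eq, Complex.star_def, Complex.conj_I, neg_smul]
  have := map_starLie_of_skew_left hpv hsmul hunit hIh x
  rw [starLie_I_smul, hsmul, hsmul, starLie_I_smul, hh.star_eq,
    (isSelfAdjoint_map_of_isSelfAdjoint hpv hsmul hunit hh).star_eq] at this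
  exact smul_right_injective S Complex.I_ne_zero this

theorem preservesSelfAdjointProducts [StarModule ℂ R] [StarModule ℂ S] :
    PreservesSelfAdjointProducts φ where
  map_zero := by simpa using hsmul 0 0
  map_jordanMul _ hh := map_jordanMul hpv hsmul hunit hh
  map_starLie _ hh := map_starLie_of_isSelfAdjoint hpv hsmul hunit hh

end StarLieMap

namespace IsIdempotentElem

variable {R : Type*} [Ring R] [IsAddTorsionFree R] {P : R}

theorem mul_mul_eq_self_of_jordanMul_one_sub_eq_zero (hP : IsIdempotentElem P) {t : R}
    (ht : jordanMul (1 - P) t = 0) : P * t * P = t := by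
  have key : ∀ u : R, 2 • (u - P * u * P) = 2 • (P * jordanMul (1 - P) u * (1 - P)
      + (1 - P) * jordanMul (1 - P) u * P) + (1 - P) * jordanMul (1 - P) u * (1 - P) := by
    intro u
    simp only [jordanMul_apply, two_nsmul, mul_sub, sub_mul, mul_add, add_mul, mul_one, one_mul,
      mul_assoc, hP.eq, hP.mul_self_mul]
    abel
  have h2 := key t
  simp only [ht, mul_zero, zero_mul, add_zero, smul_zero, two_nsmul_eq_zero, sub_eq_zero] at h2
  exact h2.symm

theorem eq_of_jordanMul_eq_of_starLie_eq [StarRing R] (hP : IsIdempotentElem P) {t s : R}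
    (h₁ : jordanMul (P - (1 - P)) t = jordanMul (P - (1 - P)) s)
    (h₂ : starLie t P = starLie s P) (h₃ : starLie t (1 - P) = starLie s (1 - P)) : t = s := by
  have key : ∀ u : R, 2 • u = P * jordanMul (P - (1 - P)) u * P
      - (1 - P) * jordanMul (P - (1 - P)) u * (1 - P)
      + 2 • (P * starLie u (1 - P) * (1 - P) + (1 - P) * starLie u P * P) := by
    intro u
    simp only [jordanMul_apply, starLie, two_nsmul, mul_sub, sub_mul, mul_add, add_mul, mul_one,
      one_mul, mul_assoc, hP.eq, hP.mul_self_mul]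
    abel
  exact nsmul_right_injective two_ne_zero (show 2 • t = 2 • s by rw [key t, key s, h₁, h₂, h₃])

end IsIdempotentElem

namespace PreservesSelfAdjointProducts

variable {R S : Type*} [Ring R] [StarRing R] [IsAddTorsionFree R] [Ring S] [StarRing S]
  {φ : R → S} (hφ : PreservesSelfAdjointProducts φ) (hbij : Function.Bijective φ)
  {P : R} (hP : IsStarProjection P)
include hφ hbij hP

theorem map_add_peirce₁₂_peirce₂₁ (x y : R) :
    φ (P * x * (1 - P) + (1 - P) * y * P) = φ (P * x * (1 - P)) + φ ((1 - P) * y * P) := by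
  have he := hP.isIdempotentElem
  obtain ⟨t, ht⟩ := hbij.2 (φ (P * x * (1 - P)) + φ ((1 - P) * y * P))
  have hJ := apply_eq_apply_add_of_map_eq_add hbij.1
    (hφ.map_jordanMul _ (hP.isSelfAdjoint.sub hP.one_sub.isSelfAdjoint)) ht <| by
      rw [show jordanMul (P - (1 - P)) ((1 - P) * y * P) = 0 by
        simp only [jordanMul_apply, mul_sub, sub_mul, mul_one, one_mul, mul_assoc, he.eq,
          he.mul_self_mul]; abel, add_zero, hφ.map_zero, add_zero]
  have hK₁ := apply_eq_apply_add_of_map_eq_add hbij.1 (f := starLieRight P)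
    (g := starLieRight (φ P)) (hφ.map_starLie _ hP.isSelfAdjoint) ht <| by
      rw [show starLieRight P (P * x * (1 - P)) = 0 by
        simp only [starLieRight_apply, starLie, star_mul, star_sub, hP.isSelfAdjoint.star_eq,
          mul_sub, sub_mul, mul_one, mul_assoc, he.eq, he.mul_self_mul]; abel,
        zero_add, hφ.map_zero, zero_add]
  have hK₂ := apply_eq_apply_add_of_map_eq_add hbij.1 (f := starLieRight (1 - P))
    (g := starLieRight (φ (1 - P))) (hφ.map_starLie _ hP.one_sub.isSelfAdjoint) ht <| by
      rw [show starLieRight (1 - P) ((1 - P) * y * P) = 0 by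
        simp only [starLieRight_apply, starLie, star_mul, star_sub, hP.isSelfAdjoint.star_eq,
          mul_sub, sub_mul, mul_one, one_mul, mul_assoc, he.eq, he.mul_self_mul]; abel,
        add_zero, hφ.map_zero, add_zero]
  rwa [← he.eq_of_jordanMul_eq_of_starLie_eq hJ hK₁ hK₂]

theorem map_add_peirce₁₁_offDiag (x y z : R) :
    φ (P * x * P + (P * y * (1 - P) + (1 - P) * z * P)) =
      φ (P * x * P) + φ (P * y * (1 - P) + (1 - P) * z * P) := by
  have he := hP.isIdempotentElem
  obtain ⟨t, ht⟩ := hbij.2 (φ (P * x * P) + φ (P * y * (1 - P) + (1 - P) * z * P))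
  have hQ := apply_eq_apply_add_of_map_eq_add hbij.1
    (hφ.map_jordanMul _ hP.one_sub.isSelfAdjoint) ht <| by
      rw [show jordanMul (1 - P) (P * x * P) = 0 by
        simp only [jordanMul_apply, mul_sub, sub_mul, mul_one, one_mul, mul_assoc, he.eq,
          he.mul_self_mul]; abel, zero_add, hφ.map_zero, zero_add]
  have hT := apply_eq_apply_add_of_map_eq_add hbij.1
    (hφ.map_jordanMul _ (hP.isSelfAdjoint.sub hP.one_sub.isSelfAdjoint)) ht <| by
      rw [show jordanMul (P - (1 - P)) (P * y * (1 - P) + (1 - P) * z * P) = 0 by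
        simp only [jordanMul_apply, mul_sub, sub_mul, mul_add, add_mul, mul_one, one_mul,
          mul_assoc, he.eq, he.mul_self_mul]; abel, add_zero, hφ.map_zero, add_zero]
  have hJ : ∀ u, jordanMul P u = jordanMul (P - (1 - P)) u + jordanMul (1 - P) u := fun u => by
    simp only [jordanMul_apply]; noncomm_ring
  rwa [← eq_of_jordanMul_eq (by rw [hJ, hJ, hT, hQ]) hQ]

theorem map_add_peirce₁₁_compl (x y z w : R) :
    φ (P * x * P + (P * y * (1 - P) + (1 - P) * z * P + (1 - P) * w * (1 - P))) =
      φ (P * x * P) + φ (P * y * (1 - P) + (1 - P) * z * P + (1 - P) * w * (1 - P)) := by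
  have he := hP.isIdempotentElem
  obtain ⟨t, ht⟩ :=
    hbij.2 (φ (P * x * P) + φ (P * y * (1 - P) + (1 - P) * z * P + (1 - P) * w * (1 - P)))
  have hQ := apply_eq_apply_add_of_map_eq_add hbij.1
    (hφ.map_jordanMul _ hP.one_sub.isSelfAdjoint) ht <| by
      rw [show jordanMul (1 - P) (P * x * P) = 0 by
        simp only [jordanMul_apply, mul_sub, sub_mul, mul_one, one_mul, mul_assoc, he.eq,
          he.mul_self_mul]; abel, zero_add, hφ.map_zero, zero_add]
  have hP' := apply_eq_apply_add_of_map_eq_add hbij.1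
    (hφ.map_jordanMul _ hP.isSelfAdjoint) ht <| by
      rw [show jordanMul P (P * x * P) = P * (x + x) * P by
          simp only [jordanMul_apply, mul_add, add_mul, mul_assoc, he.eq, he.mul_self_mul],
        show jordanMul P (P * y * (1 - P) + (1 - P) * z * P + (1 - P) * w * (1 - P)) =
          P * y * (1 - P) + (1 - P) * z * P by
          simp only [jordanMul_apply, mul_sub, sub_mul, mul_add, add_mul, mul_one, one_mul,
            mul_assoc, he.eq, he.mul_self_mul]; abel]
      exact hφ.map_add_peirce₁₁_offDiag hbij hP (x + x) y z
  rwa [← eq_of_jordanMul_eq hP' hQ]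

theorem map_eq_sum_peirce (x : R) :
    φ x = φ (P * x * P) + φ (P * x * (1 - P)) + φ ((1 - P) * x * P) +
      φ ((1 - P) * x * (1 - P)) := by
  have h₂ := hφ.map_add_peirce₁₁_offDiag hbij hP.one_sub x x x
  rw [sub_sub_cancel] at h₂
  calc φ x = φ (P * x * P + (P * x * (1 - P) + (1 - P) * x * P + (1 - P) * x * (1 - P))) := by
        congr 1; noncomm_ring
    _ = φ (P * x * P) + φ ((1 - P) * x * (1 - P) + ((1 - P) * x * P + P * x * (1 - P))) := by
        rw [hφ.map_add_peirce₁₁_compl hbij hP]; congr 2; abel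
    _ = _ := by
        rw [h₂, add_comm ((1 - P) * x * P), hφ.map_add_peirce₁₂_peirce₂₁ hbij hP]; abel

theorem map_add_peirce₁₂ (x y : R) :
    φ (P * x * (1 - P) + P * y * (1 - P)) = φ (P * x * (1 - P)) + φ (P * y * (1 - P)) := by
  have he := hP.isIdempotentElem
  set a := P * x * (1 - P) with ha
  set b := P * y * (1 - P) with hb
  set h := P + (b + star b) with hh_def
  have hh : IsSelfAdjoint h := hP.isSelfAdjoint.add (IsSelfAdjoint.add_star_self b)
  have hz : φ (a + (1 - P)) = φ a + φ (1 - P) := by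
    have := hφ.map_add_peirce₁₁_offDiag hbij hP.one_sub 1 0 x
    simp only [sub_sub_cancel, mul_one, mul_zero, zero_mul, zero_add,
      hP.one_sub.isIdempotentElem.eq] at this
    rw [add_comm, this, add_comm]
  -- The `(1,2)` corner of `jordanMul h (a + (1 - P))` is `a + b`; each of its other corners is
  -- the corresponding corner of `jordanMul h a` or of `jordanMul h (1 - P)`.
  have key : φ (jordanMul h (a + (1 - P))) = φ (jordanMul h a) + φ (jordanMul h (1 - P)) := by
    rw [hφ.map_jordanMul h hh, hz, map_add, ← hφ.map_jordanMul h hh, ← hφ.map_jordanMul h hh]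
  obtain ⟨c₁, c₂, c₃, c₄, c₅, c₆, c₇, c₈, c₉⟩ :
      P * jordanMul h (a + (1 - P)) * P = P * jordanMul h a * P ∧
      P * jordanMul h (a + (1 - P)) * (1 - P) = a + b ∧
      (1 - P) * jordanMul h (a + (1 - P)) * P = (1 - P) * jordanMul h (1 - P) * P ∧
      (1 - P) * jordanMul h (a + (1 - P)) * (1 - P) = (1 - P) * jordanMul h a * (1 - P) ∧
      P * jordanMul h a * (1 - P) = a ∧ (1 - P) * jordanMul h a * P = 0 ∧
      P * jordanMul h (1 - P) * P = 0 ∧ P * jordanMul h (1 - P) * (1 - P) = b ∧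
      (1 - P) * jordanMul h (1 - P) * (1 - P) = 0 := by
    refine ⟨?_, ?_, ?_, ?_, ?_, ?_, ?_, ?_, ?_⟩ <;>
    · simp only [ha, hb, hh_def, jordanMul_apply, star_mul, star_sub, hP.isSelfAdjoint.star_eq,
        mul_sub, sub_mul, mul_add, add_mul, mul_one, one_mul, mul_assoc, he.eq, he.mul_self_mul]
      abel
  rw [hφ.map_eq_sum_peirce hbij hP (jordanMul h (a + (1 - P))),
    hφ.map_eq_sum_peirce hbij hP (jordanMul h a),
    hφ.map_eq_sum_peirce hbij hP (jordanMul h (1 - P)),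
    c₁, c₂, c₃, c₄, c₅, c₆, c₇, c₈, c₉, hφ.map_zero] at key
  rw [← sub_eq_zero]
  convert sub_eq_zero.2 key using 1
  abel

theorem map_add_of_diag_eq_zero {u v : R} (hu₁ : P * u * P = 0) (hu₂ : (1 - P) * u * (1 - P) = 0)
    (hv₁ : P * v * P = 0) (hv₂ : (1 - P) * v * (1 - P) = 0) : φ (u + v) = φ u + φ v := by
  have h₂₁ := hφ.map_add_peirce₁₂ hbij hP.one_sub u v
  rw [sub_sub_cancel] at h₂₁
  rw [hφ.map_eq_sum_peirce hbij hP (u + v), hφ.map_eq_sum_peirce hbij hP u,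
    hφ.map_eq_sum_peirce hbij hP v]
  simp only [mul_add, add_mul, hu₁, hu₂, hv₁, hv₂, add_zero, hφ.map_zero,
    hφ.map_add_peirce₁₂ hbij hP, h₂₁]
  abel

theorem map_add_peirce₁₁ (hfaith : ∀ X, (∀ Y, (1 - P) * Y * X = 0) → X = 0) (x y : R) :
    φ (P * x * P + P * y * P) = φ (P * x * P) + φ (P * y * P) := by
  have he := hP.isIdempotentElem
  obtain ⟨t, ht⟩ := hbij.2 (φ (P * x * P) + φ (P * y * P))
  have hQ := apply_eq_apply_add_of_map_eq_add hbij.1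
    (hφ.map_jordanMul _ hP.one_sub.isSelfAdjoint) ht <| by
      rw [show jordanMul (1 - P) (P * x * P) = 0 by
        simp only [jordanMul_apply, mul_sub, sub_mul, mul_one, one_mul, mul_assoc, he.eq,
          he.mul_self_mul]; abel, zero_add, hφ.map_zero, zero_add]
  have hPtP : P * t * P = t := he.mul_mul_eq_self_of_jordanMul_one_sub_eq_zero <| by
    rw [hQ]
    simp only [jordanMul_apply, mul_sub, sub_mul, mul_add, add_mul, mul_one, one_mul, mul_assoc,
      he.eq, he.mul_self_mul]
    abel
  have hW : ∀ Y, jordanMul (P * star Y * (1 - P) + (1 - P) * Y * P) t =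
      jordanMul (P * star Y * (1 - P) + (1 - P) * Y * P) (P * x * P + P * y * P) := fun Y => by
    have hw : IsSelfAdjoint (P * star Y * (1 - P) + (1 - P) * Y * P) := by
      simp [IsSelfAdjoint, star_mul, hP.isSelfAdjoint.star_eq, mul_assoc, add_comm]
    refine apply_eq_apply_add_of_map_eq_add hbij.1 (hφ.map_jordanMul _ hw) ht
      (hφ.map_add_of_diag_eq_zero hbij hP ?_ ?_ ?_ ?_) <;>
    · simp only [jordanMul_apply, mul_sub, sub_mul, mul_add, add_mul, mul_one, one_mul,
        mul_assoc, he.eq, he.mul_self_mul]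
      abel
  -- `t - (a + b)` lies in the `(1,1)` corner, where `jordanMul (w + w*)` with `w` in the `(1,2)`
  -- corner reduces to left multiplication by `w*`.
  suffices hd : t - (P * x * P + P * y * P) = 0 by rwa [← sub_eq_zero.1 hd]
  refine hfaith _ fun Y => ?_
  have hcorner : ∀ d, (1 - P) * Y * (P * d * P) =
      (1 - P) * jordanMul (P * star Y * (1 - P) + (1 - P) * Y * P) (P * d * P) * P := fun d => by
    simp only [jordanMul_apply, mul_sub, sub_mul, mul_add, add_mul, mul_one, one_mul, mul_assoc,
      he.eq, he.mul_self_mul]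
    abel
  have hd : P * (t - (P * x * P + P * y * P)) * P = t - (P * x * P + P * y * P) := by
    conv_rhs => rw [← hPtP]
    simp only [mul_sub, sub_mul, mul_add, add_mul, mul_assoc, he.eq, he.mul_self_mul]
  rw [← hd, hcorner, hd, map_sub, hW, sub_self, mul_zero, zero_mul]

theorem map_add (hfaith₁ : ∀ X, (∀ Y, P * Y * X = 0) → X = 0)
    (hfaith₂ : ∀ X, (∀ Y, (1 - P) * Y * X = 0) → X = 0) (x y : R) :
    φ (x + y) = φ x + φ y := by
  have h₂₁ := hφ.map_add_peirce₁₂ hbij hP.one_sub x y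
  have h₂₂ := hφ.map_add_peirce₁₁ hbij hP.one_sub (by rwa [sub_sub_cancel]) x y
  rw [sub_sub_cancel] at h₂₁
  rw [hφ.map_eq_sum_peirce hbij hP (x + y), hφ.map_eq_sum_peirce hbij hP x,
    hφ.map_eq_sum_peirce hbij hP y]
  simp only [mul_add, add_mul, hφ.map_add_peirce₁₁ hbij hP hfaith₂, hφ.map_add_peirce₁₂ hbij hP,
    h₂₁, h₂₂]
  abel

end PreservesSelfAdjointProducts

theorem LinearMap.map_star_of_isSelfAdjoint {M N : Type*} [AddCommGroup M] [Module ℂ M]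
    [StarAddMonoid M] [StarModule ℂ M] [AddCommGroup N] [Module ℂ N] [StarAddMonoid N]
    [StarModule ℂ N] (f : M →ₗ[ℂ] N) (hf : ∀ h, IsSelfAdjoint h → IsSelfAdjoint (f h)) (x : M) :
    f (star x) = star (f x) := by
  rw [← realPart_add_I_smul_imaginaryPart x]
  simp only [star_add, star_smul, map_add, map_smul, map_neg, Complex.star_def, Complex.conj_I,
    neg_smul, (realPart x).2.star_eq, (imaginaryPart x).2.star_eq, (hf _ (realPart x).2).star_eq,
    (hf _ (imaginaryPart x).2).star_eq]

theorem LinearMap.map_mul_of_map_starLie {R S : Type*} [Ring R] [StarRing R] [Algebra ℂ R]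
    [StarModule ℂ R] [Ring S] [StarRing S] [Algebra ℂ S] [StarModule ℂ S] (f : R →ₗ[ℂ] S)
    (hf : ∀ h, IsSelfAdjoint h → ∀ x, f (starLie x h) = starLie (f x) (f h)) (x y : R) :
    f (x * y) = f x * f y := by
  have hsa : ∀ h, IsSelfAdjoint h → f (x * h) = f x * f h := fun h hh => by
    have h₁ := hf h hh x
    have h₂ := hf h hh (Complex.I • x)
    rw [starLie_I_smul, map_smul, map_smul, starLie_I_smul] at h₂
    have h₂ := smul_right_injective S Complex.I_ne_zero h₂
    rw [starLie, map_sub, starLie] at h₁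
    rw [map_add] at h₂
    refine smul_right_injective S (two_ne_zero : (2 : ℂ) ≠ 0) ?_
    calc (2 : ℂ) • f (x * h) = (f (x * h) - f (h * star x)) + (f (x * h) + f (h * star x)) := by
          rw [two_smul]; abel
      _ = (2 : ℂ) • (f x * f h) := by rw [h₁, h₂, two_smul]; abel
  conv_lhs => rw [← realPart_add_I_smul_imaginaryPart y]
  rw [mul_add, mul_smul_comm, map_add, map_smul, hsa _ (realPart y).2, hsa _ (imaginaryPart y).2,
    ← mul_smul_comm, ← mul_add, ← map_smul, ← map_add, realPart_add_I_smul_imaginaryPart]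

theorem stmt17_general
    (P₁ : A) (hP₁proj : P₁ * P₁ = P₁) (hP₁star : star P₁ = P₁)
    (P₂ : A) (hP₂ : P₂ = 1 - P₁)
    (hspade : ∀ Pj ∈ ({P₁, P₂} : Set A), ∀ X : A, (∀ Y : A, Pj * Y * X = 0) → X = 0)
    (m : ℕ)
    (φ : A → A') (hbij : Function.Bijective φ) (hunit : φ 1 = 1)
    (hsmul : ∀ (c : ℂ) (a : A), φ (c • a) = c • φ a)
    :
    (∀ x : Fin (m + 2) → A, φ (pvec (m + 1) x) = pvec (m + 1) (fun i => φ (x i))) ↔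
      ((∀ a b : A, φ (a + b) = φ a + φ b) ∧ (∀ a b : A, φ (a * b) = φ a * φ b) ∧
        (∀ a : A, φ (star a) = star (φ a))) := by
  refine ⟨fun hpv => ?_, fun ⟨hadd, hmul, hstar⟩ => map_pvec hadd hmul hstar (m + 1)⟩
  have : IsAddTorsionFree A := .of_isTorsionFree ℂ A
  have hφ := preservesSelfAdjointProducts hpv hsmul hunit
  have hadd := hφ.map_add hbij ⟨hP₁proj, hP₁star⟩ (hspade P₁ (by simp))
    (hP₂ ▸ hspade P₂ (by simp))
  let f : A →ₗ[ℂ] A' := { toFun := φ, map_add' := hadd, map_smul' := hsmul }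
  exact ⟨hadd, f.map_mul_of_map_starLie hφ.map_starLie,
    f.map_star_of_isSelfAdjoint fun _ => isSelfAdjoint_map_of_isSelfAdjoint hpv hsmul hunit⟩

theorem stmt17
    (P₁ : A) (hP₁proj : P₁ * P₁ = P₁) (hP₁star : star P₁ = P₁)
    (hP₁ne0 : P₁ ≠ 0) (hP₁ne1 : P₁ ≠ 1)
    (P₂ : A) (hP₂ : P₂ = 1 - P₁)
    (hspade : ∀ Pj ∈ ({P₁, P₂} : Set A), ∀ X : A, (∀ Y : A, Pj * Y * X = 0) → X = 0)
    (m : ℕ)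
    (φ : A → A') (hbij : Function.Bijective φ) (hunit : φ 1 = 1)
    (hsmul : ∀ (c : ℂ) (a : A), φ (c • a) = c • φ a)
    (hclub : ∀ Pj ∈ ({P₁, P₂} : Set A), ∀ Y : A', (∀ Z : A', φ Pj * Z * Y = 0) → Y = 0)
    :
    (∀ x : Fin (m + 2) → A, φ (pvec (m + 1) x) = pvec (m + 1) (fun i => φ (x i))) ↔
      ((∀ a b : A, φ (a + b) = φ a + φ b) ∧ (∀ a b : A, φ (a * b) = φ a * φ b) ∧
        (∀ a : A, φ (star a) = star (φ a))) :=
  stmt17_general P₁ hP₁proj hP₁star P₂ hP₂ hspade m φ hbij hunit hsmul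
end
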